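/- Let n = 2m with m even, and let α, β ∈ F_2^n with α ⊕ β = e ⊕ e_i ⊕ e_n, α(i) = α(n) = 1, for some even i with 1 ≤ i ≤ n-1. Then θ(α,i) + ψ(α) + θ(β,i) + ψ(β) ≡ 1 (mod 2), where θ(α,i) = wt_{i,n}(α) + i/2 and ψ(α) = Σ_{k=1}^{m} α(2k). -/

import Mathlib

/-! Since `α ⊕ β = e ⊕ e_i ⊕ e_n`, on any set of coordinates containing `i` and `n` the weights of
`α` and `β` add up, mod 2, to the size of that set. The block `i, …, n` has `n - i + 1` coordinates,
an odd number, there are `m` even positions, an even number, and the two `i/2` terms of `θ` cancel;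
so the total is odd. -/

open Finset

/-- The `i`-th standard basis vector of `F_2^{n+1}`. -/
def unitV (n : ℕ) (i : Fin (n+1)) : Fin (n+1) → ZMod 2 :=
  fun j => if j = i then 1 else 0

/-- The all-ones vector of `F_2^{n+1}`. -/
def onesV (n : ℕ) : Fin (n+1) → ZMod 2 := fun _ => 1

/-- `φ(α, i) = α ⊕ α(n+1)·e ⊕ e_i`. -/
def phiV (n : ℕ) (α : Fin (n+1) → ZMod 2) (i : Fin (n+1)) :
    Fin (n+1) → ZMod 2 :=
  α + α (Fin.last n) • onesV n + unitV n i

/-- `wt_{s,t}(α)`, the number of ones among coordinates `s,…,t`. -/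
def wtIcc (n : ℕ) (α : Fin (n+1) → ZMod 2) (s t : Fin (n+1)) : ℕ :=
  ∑ l ∈ Finset.Icc s t, (α l).val

/-- Hamming weight. -/
def wtV (n : ℕ) (α : Fin (n+1) → ZMod 2) : ℕ := ∑ l, (α l).val

/-- `θ(α,i)`: with the 1-based position of index `i : Fin (n+1)` being `i.1 + 1`,
`θ(α,i) = wt_{i,n+1}(α) + i/2` for even `i`, and
`θ(α,i) = wt_{i,n+1}(α) + (i-1)/2 + α(n+1)` for odd `i`. -/
def thetaV (n : ℕ) (α : Fin (n+1) → ZMod 2) (i : Fin (n+1)) : ℤ :=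
  if (i.1 + 1) % 2 = 0 then
    (wtIcc n α i (Fin.last n) : ℤ) + ((i.1 + 1) / 2 : ℕ)
  else
    (wtIcc n α i (Fin.last n) : ℤ) + ((i.1 : ℕ) / 2 : ℕ) + ((α (Fin.last n)).val : ℕ)

/-- `ψ(α) = Σ_{k=1}^{m} α(2k)`, the number of ones of `α` in even (1-based) positions. -/
def psiV (n : ℕ) (α : Fin (n+1) → ZMod 2) : ℕ :=
  ∑ l ∈ Finset.univ.filter (fun l : Fin (n+1) => (l.1 + 1) % 2 = 0), (α l).val

lemma sum_range_ite_succ_mod_two (N : ℕ) :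
    (∑ k ∈ range N, if (k + 1) % 2 = 0 then 1 else 0) = N / 2 := by
  induction N with
  | zero => rfl
  | succ N ih => rw [sum_range_succ, ih]; split <;> omega

lemma card_filter_succ_mod_two_eq_zero (N : ℕ) :
    #{l : Fin N | (l.1 + 1) % 2 = 0} = N / 2 := by
  rw [card_filter, Fin.sum_univ_eq_sum_range (fun k => if (k + 1) % 2 = 0 then 1 else 0),
    sum_range_ite_succ_mod_two]

lemma sum_unitV {n : ℕ} {F : Finset (Fin (n + 1))} {i : Fin (n + 1)} (hi : i ∈ F) :
    ∑ l ∈ F, unitV n i l = 1 := by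
  simp [unitV, hi]

lemma sum_val_add_sum_val_eq_card {n : ℕ} {α β : Fin (n + 1) → ZMod 2} {i j : Fin (n + 1)}
    (h : α + β = onesV n + unitV n i + unitV n j) {F : Finset (Fin (n + 1))}
    (hi : i ∈ F) (hj : j ∈ F) :
    ((∑ l ∈ F, (α l).val + ∑ l ∈ F, (β l).val : ℕ) : ZMod 2) = #F := by
  calc ((∑ l ∈ F, (α l).val + ∑ l ∈ F, (β l).val : ℕ) : ZMod 2) = ∑ l ∈ F, (α + β) l := by
        simp [sum_add_distrib]
    _ = #F + (1 + 1) := by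
        rw [h]
        simp only [Pi.add_apply, sum_add_distrib, sum_unitV hi, sum_unitV hj, add_assoc]
        simp [onesV]
    _ = #F := by rw [CharTwo.add_self_eq_zero, add_zero]

theorem stmt11_general (m n : ℕ) (hm : Even m) (hn : n + 1 = 2 * m)
    (i : Fin (n+1)) (hiev : (i.1 + 1) % 2 = 0)
    (α β : Fin (n+1) → ZMod 2)
    (h : α + β = onesV n + unitV n i + unitV n (Fin.last n)) :
    thetaV n α i + (psiV n α : ℤ) + thetaV n β i + (psiV n β : ℤ) ≡ 1 [ZMOD 2] := by
  have hwt : ((wtIcc n α i (Fin.last n) + wtIcc n β i (Fin.last n) : ℕ) : ZMod 2) = 1 := by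
    rw [wtIcc, wtIcc,
      sum_val_add_sum_val_eq_card h (by simp [Fin.le_last]) (by simp [Fin.le_last]), Fin.card_Icc,
      Fin.val_last, ← ZMod.natCast_mod, show (n + 1 - i.1) % 2 = 1 by omega, Nat.cast_one]
  have hpsi : ((psiV n α + psiV n β : ℕ) : ZMod 2) = 0 := by
    rw [psiV, psiV, sum_val_add_sum_val_eq_card h (by simp [hiev])
        (by simp only [mem_filter, mem_univ, true_and, Fin.val_last]; omega),
      card_filter_succ_mod_two_eq_zero, hn, Nat.mul_div_cancel_left _ two_pos,
      ZMod.natCast_eq_zero_iff_even]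
    exact hm
  apply (ZMod.intCast_eq_intCast_iff _ _ 2).1
  simp only [thetaV, if_pos hiev]
  push_cast at hwt hpsi ⊢
  linear_combination (norm := (ring_nf; reduce_mod_char)) hwt + hpsi

/-- `n = 2m`, `m` even, `α ⊕ β = e ⊕ e_i ⊕ e_n`, `α(i) = α(n) = 1`,
`i` even, `1 ≤ i ≤ n-1`.  Then `θ(α,i) + ψ(α) + θ(β,i) + ψ(β) ≡ 1 (mod 2)`. -/
theorem stmt11 (m n : ℕ) (hm : Even m) (hn : n + 1 = 2 * m)
    (i : Fin (n+1)) (hi : i ≠ Fin.last n) (hiev : (i.1 + 1) % 2 = 0)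
    (α β : Fin (n+1) → ZMod 2)
    (hαi : α i = 1) (hαn : α (Fin.last n) = 1)
    (h : α + β = onesV n + unitV n i + unitV n (Fin.last n)) :
    thetaV n α i + (psiV n α : ℤ) + thetaV n β i + (psiV n β : ℤ) ≡ 1 [ZMOD 2] :=
  stmt11_general m n hm hn i hiev α β h
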